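/- For every integer d ≥ 1 and every δ ∈ (0,1/2), the integral ∫_{ℝ×ℝ^d} P(z) · ρ(‖z‖)² dz is finite, where ρ(r)² = min(r^{−(1−2δ)}, r^{−(d+2)−2δ}). In particular, whenever a function κ : ℝ×ℝ^d → ℝ satisfies |κ(z)| ≤ ρ(‖z‖)², the constant ∫_{ℝ×ℝ^d} P(z) κ(z) dz converges absolutely. -/

import Mathlib

open Real MeasureTheory

/-- Space-time `ℝ × ℝ^d`. -/
abbrev SpaceTime (d : ℕ) := ℝ × EuclideanSpace ℝ (Fin d)

/-- The parabolic norm `‖(t,x)‖ = (|x|⁴ + t²)^{1/4}`. -/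
noncomputable def pnorm {d : ℕ} (z : SpaceTime d) : ℝ :=
  (‖z.2‖ ^ 4 + z.1 ^ 2) ^ ((1 : ℝ) / 4)

/-- The heat kernel on `ℝ × ℝ^d`. -/
noncomputable def heatP (d : ℕ) (z : SpaceTime d) : ℝ :=
  if 0 < z.1 then (4 * π * z.1) ^ (-(d : ℝ) / 2) * Real.exp (-‖z.2‖ ^ 2 / (4 * z.1))
  else 0

/-- `ρ(r)² = min (r^{-(1-2δ)}) (r^{-(d+2)-2δ})`. -/
noncomputable def rhoSq (d : ℕ) (δ r : ℝ) : ℝ :=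
  min (r ^ (-(1 - 2 * δ))) (r ^ (-((d : ℝ) + 2) - 2 * δ))


/-! The heat kernel is a probability density in space at every positive time, so integrating it
against a function of time alone returns the time integral. Since `√t ≤ ‖(t, x)‖` and `ρ²` is
decreasing, `P · ρ(‖·‖)²` is dominated by `P(t, x) · ρ(√t)²`, whose time profile
`min (t ^ (-(1 - 2δ)/2)) (t ^ (-(d + 2 + 2δ)/2))` is integrable: the first exponent is `> -1` at
`0`, the second `< -1` at `∞`. -/

open Set

variable {d : ℕ}

section HeatKernel

lemma heatP_of_nonpos {z : SpaceTime d} (ht : z.1 ≤ 0) : heatP d z = 0 :=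
  if_neg ht.not_gt

lemma heatP_nonneg (z : SpaceTime d) : 0 ≤ heatP d z := by
  unfold heatP
  split_ifs <;> positivity

lemma measurable_heatP : Measurable (heatP d) :=
  Measurable.ite (measurableSet_lt measurable_const measurable_fst) (by fun_prop) measurable_const

lemma heatP_eq_mul_gaussian {t : ℝ} (ht : 0 < t) (x : EuclideanSpace ℝ (Fin d)) :
    heatP d (t, x) = (4 * π * t) ^ (-(d : ℝ) / 2) * rexp (-(4 * t)⁻¹ * ‖x‖ ^ 2) := by
  rw [heatP, if_pos ht]
  ring_nf

lemma integral_heatP_slice {t : ℝ} (ht : 0 < t) : ∫ x, heatP d (t, x) = 1 := by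
  have h4πt : 0 < 4 * π * t := by positivity
  simp_rw [heatP_eq_mul_gaussian ht]
  rw [integral_const_mul, GaussianFourier.integral_rexp_neg_mul_sq_norm (by positivity),
    finrank_euclideanSpace_fin, show π / (4 * t)⁻¹ = 4 * π * t by field_simp, ← Real.rpow_add h4πt,
    neg_div, neg_add_cancel, Real.rpow_zero]

lemma integrable_heatP_slice {t : ℝ} (ht : 0 < t) : Integrable fun x => heatP d (t, x) :=
  Integrable.of_integral_ne_zero (by rw [integral_heatP_slice ht]; exact one_ne_zero)

theorem integrable_heatP_mul_comp_fst {g : ℝ → ℝ} (hg : IntegrableOn g (Ioi 0)) :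
    Integrable fun z : SpaceTime d => heatP d z * g z.1 := by
  set G := (Ioi 0).indicator g
  have hG : Integrable G := (integrable_indicator_iff measurableSet_Ioi).2 hg
  have hgG : (fun z : SpaceTime d => heatP d z * g z.1) = fun z => heatP d z * G z.1 := by
    ext z
    by_cases ht : 0 < z.1
    · rw [show G z.1 = g z.1 from indicator_of_mem (mem_Ioi.2 ht) g]
    · rw [heatP_of_nonpos (not_lt.1 ht), zero_mul, zero_mul]
  have hslice : ∀ t, ∫ x, ‖heatP d (t, x) * G t‖ = ‖G t‖ := by
    intro t
    by_cases ht : 0 < t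
    · simp_rw [norm_mul, Real.norm_of_nonneg (heatP_nonneg _)]
      rw [integral_mul_const, integral_heatP_slice ht, one_mul]
    · simp [G, indicator_of_notMem (show t ∉ Ioi 0 from ht)]
  rw [hgG, Measure.volume_eq_prod]
  refine (integrable_prod_iff (f := fun z : SpaceTime d => heatP d z * G z.1)
    (measurable_heatP.aestronglyMeasurable.mul hG.aestronglyMeasurable.comp_fst)).2
    ⟨Filter.Eventually.of_forall fun t => ?_, by simpa only [hslice] using hG.norm⟩
  by_cases ht : 0 < t
  · exact (integrable_heatP_slice ht).mul_const (G t)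
  · simp [G, indicator_of_notMem (show t ∉ Ioi 0 from ht)]

end HeatKernel

theorem integrableOn_Ioi_min_rpow {a b : ℝ} (ha : -1 < a) (hb : b < -1) :
    IntegrableOn (fun t : ℝ => min (t ^ a) (t ^ b)) (Ioi 0) := by
  have hmeas : AEStronglyMeasurable (fun t : ℝ => min (t ^ a) (t ^ b)) :=
    (by fun_prop : Measurable fun t : ℝ => min (t ^ a) (t ^ b)).aestronglyMeasurable
  have hnorm : ∀ t ∈ Ioi (0 : ℝ), ‖min (t ^ a) (t ^ b)‖ = min (t ^ a) (t ^ b) := fun t ht =>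
    Real.norm_of_nonneg (le_min (Real.rpow_nonneg ht.le _) (Real.rpow_nonneg ht.le _))
  have hnear : IntegrableOn (fun t : ℝ => min (t ^ a) (t ^ b)) (Ioc 0 1) := by
    refine Integrable.mono' ((intervalIntegral.intervalIntegrable_rpow' ha).1) hmeas.restrict
      ((ae_restrict_iff' measurableSet_Ioc).2 (Filter.Eventually.of_forall fun t ht => ?_))
    rw [hnorm t ht.1]
    exact min_le_left _ _
  have hfar : IntegrableOn (fun t : ℝ => min (t ^ a) (t ^ b)) (Ioi 1) := by
    refine Integrable.mono' ((integrableOn_Ioi_rpow_iff zero_lt_one).2 hb) hmeas.restrict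
      ((ae_restrict_iff' measurableSet_Ioi).2 (Filter.Eventually.of_forall fun t ht => ?_))
    rw [hnorm t (mem_Ioi.2 (lt_trans zero_lt_one ht))]
    exact min_le_right _ _
  rw [← Ioc_union_Ioi_eq_Ioi zero_le_one]
  exact hnear.union hfar

lemma pnorm_pow_four (z : SpaceTime d) : pnorm z ^ 4 = ‖z.2‖ ^ 4 + z.1 ^ 2 := by
  have h := Real.rpow_inv_natCast_pow (n := 4) (by positivity : 0 ≤ ‖z.2‖ ^ 4 + z.1 ^ 2) four_ne_zero
  rwa [Nat.cast_ofNat, ← one_div] at h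

lemma pnorm_nonneg (z : SpaceTime d) : 0 ≤ pnorm z :=
  Real.rpow_nonneg (by positivity) _

lemma sqrt_fst_le_pnorm (z : SpaceTime d) : √z.1 ≤ pnorm z := by
  rcases lt_or_ge z.1 0 with ht | ht
  · rw [Real.sqrt_eq_zero_of_nonpos ht.le]
    exact pnorm_nonneg z
  · refine (pow_le_pow_iff_left₀ (Real.sqrt_nonneg _) (pnorm_nonneg z) four_ne_zero).1 ?_
    rw [pnorm_pow_four, show 4 = 2 * 2 from rfl, pow_mul, Real.sq_sqrt ht]
    exact le_add_of_nonneg_left (by positivity)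

section Weight

variable {δ : ℝ}

lemma rhoSq_nonneg {r : ℝ} (hr : 0 ≤ r) : 0 ≤ rhoSq d δ r :=
  le_min (Real.rpow_nonneg hr _) (Real.rpow_nonneg hr _)

lemma rhoSq_le_rhoSq_of_le (hδ : δ ∈ Icc (-1 : ℝ) (1 / 2)) {r s : ℝ} (hr : 0 < r) (hrs : r ≤ s) :
    rhoSq d δ s ≤ rhoSq d δ r :=
  min_le_min (Real.rpow_le_rpow_of_nonpos hr hrs (by linarith [hδ.2]))
    (Real.rpow_le_rpow_of_nonpos hr hrs (by linarith [hδ.1, (Nat.cast_nonneg d : (0 : ℝ) ≤ d)]))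

lemma rhoSq_sqrt {t : ℝ} (ht : 0 ≤ t) :
    rhoSq d δ √t = min (t ^ (δ - 1 / 2)) (t ^ (-(d : ℝ) / 2 - 1 - δ)) := by
  rw [rhoSq, Real.sqrt_eq_rpow, ← Real.rpow_mul ht, ← Real.rpow_mul ht]
  ring_nf

lemma integrableOn_rhoSq_sqrt (hδ : -1 / 2 < δ) (hδd : -(d : ℝ) / 2 < δ) :
    IntegrableOn (fun t => rhoSq d δ √t) (Ioi 0) :=
  (integrableOn_Ioi_min_rpow (by linarith) (by linarith)).congr_fun
    (fun t ht => (rhoSq_sqrt (le_of_lt ht)).symm) measurableSet_Ioi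

end Weight

theorem integrable_heatP_mul_of_abs_le_rhoSq {δ : ℝ} (hδ₀ : 0 < δ) (hδ₁ : δ ≤ 1 / 2)
    {κ : SpaceTime d → ℝ} (hκ : AEStronglyMeasurable κ)
    (hbound : ∀ z, z ≠ 0 → |κ z| ≤ rhoSq d δ (pnorm z)) :
    Integrable fun z => heatP d z * κ z := by
  have hdom : Integrable fun z : SpaceTime d => heatP d z * rhoSq d δ √z.1 :=
    integrable_heatP_mul_comp_fst
      (integrableOn_rhoSq_sqrt (by linarith) (by linarith [(Nat.cast_nonneg d : (0 : ℝ) ≤ d)]))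
  refine hdom.mono' (measurable_heatP.aestronglyMeasurable.mul hκ)
    (Filter.Eventually.of_forall fun z => ?_)
  rcases le_or_gt z.1 0 with ht | ht
  · simp [heatP_of_nonpos ht]
  · have hz : z ≠ 0 := fun h => by simp [h] at ht
    rw [norm_mul, Real.norm_of_nonneg (heatP_nonneg z)]
    refine mul_le_mul_of_nonneg_left ((hbound z hz).trans ?_) (heatP_nonneg z)
    exact rhoSq_le_rhoSq_of_le ⟨by linarith, hδ₁⟩ (Real.sqrt_pos.2 ht) (sqrt_fst_le_pnorm z)

theorem stmt5_general (d : ℕ) (δ : ℝ) (hδ : δ ∈ Set.Ioo (0 : ℝ) (1 / 2)) :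
    Integrable (fun z : SpaceTime d => heatP d z * rhoSq d δ (pnorm z)) ∧
    ∀ κ : SpaceTime d → ℝ, Measurable κ →
      (∀ z : SpaceTime d, z ≠ 0 → |κ z| ≤ rhoSq d δ (pnorm z)) →
      Integrable (fun z : SpaceTime d => heatP d z * κ z) := by
  have hρ : Measurable fun z : SpaceTime d => rhoSq d δ (pnorm z) := by
    unfold rhoSq pnorm
    fun_prop
  exact ⟨integrable_heatP_mul_of_abs_le_rhoSq hδ.1 hδ.2.le hρ.aestronglyMeasurable
      fun z _ => (abs_of_nonneg (rhoSq_nonneg (pnorm_nonneg z))).le,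
    fun κ hκ => integrable_heatP_mul_of_abs_le_rhoSq hδ.1 hδ.2.le hκ.aestronglyMeasurable⟩

theorem stmt5 (d : ℕ) (hd : 1 ≤ d) (δ : ℝ) (hδ : δ ∈ Set.Ioo (0 : ℝ) (1 / 2)) :
    Integrable (fun z : SpaceTime d => heatP d z * rhoSq d δ (pnorm z)) ∧
    ∀ κ : SpaceTime d → ℝ, Measurable κ →
      (∀ z : SpaceTime d, z ≠ 0 → |κ z| ≤ rhoSq d δ (pnorm z)) →
      Integrable (fun z : SpaceTime d => heatP d z * κ z) :=
  stmt5_general d δ hδ
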